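/- First-order condition for the population quantile regression coefficient: if θ* minimizes θ ↦ E[ρ_τ(Y − ⟨Z, θ⟩)] over ℝ^k, E‖Z‖₂ < ∞, and the conditional distribution of Y given Z is continuous (so that P(Y = ⟨Z,θ*⟩) = 0), then E[Z·φ_τ(Y − ⟨Z, θ*⟩)] = 0. -/

import Mathlib

open MeasureTheory Matrix

/-- The check loss `ρ_τ(u) = u (τ - 1{u < 0})`. -/
noncomputable def checkLoss (τ u : ℝ) : ℝ := u * (τ - if u < 0 then 1 else 0)

/-- The score `φ_τ(u) = τ - 1{u < 0}`. -/
noncomputable def score (τ u : ℝ) : ℝ := τ - if u < 0 then 1 else 0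

/-! Along a coordinate direction `e_j`, `t ↦ E[ρ_τ(Y − ⟨Z, θ*⟩ − t Z_j) − ρ_τ(Y)]` is minimal
at `t = 0`. The loss `ρ_τ` is Lipschitz and has derivative `φ_τ` away from `0`, and the residual
`Y − ⟨Z, θ*⟩` vanishes only on a null set, so differentiation under the integral sign (dominated
by a multiple of `|Z_j|`) gives `−E[Z_j φ_τ(Y − ⟨Z, θ*⟩)]` as the derivative at `0`; it vanishes
at the minimum. -/

open Filter Topology

lemma checkLoss_eq_mul_sub_min (τ u : ℝ) : checkLoss τ u = τ * u - min u 0 := by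
  rcases lt_or_ge u 0 with h | h
  · simp [checkLoss, h, min_eq_left h.le]; ring
  · simp [checkLoss, h.not_gt, min_eq_right h, mul_comm]

lemma lipschitzWith_checkLoss (τ : ℝ) : LipschitzWith (‖τ‖₊ + 1) (checkLoss τ) := by
  rw [funext (checkLoss_eq_mul_sub_min τ)]
  exact (lipschitzWith_smul τ).sub (LipschitzWith.id.min_const 0)

lemma measurable_score (τ : ℝ) : Measurable (score τ) :=
  measurable_const.sub (Measurable.ite measurableSet_Iio measurable_const measurable_const)

lemma score_eventuallyEq_of_ne_zero {τ u : ℝ} (hu : u ≠ 0) :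
    score τ =ᶠ[𝓝 u] fun _ => score τ u := by
  rcases hu.lt_or_gt with h | h
  · filter_upwards [eventually_lt_nhds h] with v hv
    simp [score, hv, h]
  · filter_upwards [eventually_gt_nhds h] with v hv
    simp [score, hv.not_gt, h.not_gt]

lemma hasDerivAt_checkLoss_of_ne_zero (τ : ℝ) {u : ℝ} (hu : u ≠ 0) :
    HasDerivAt (checkLoss τ) (score τ u) u := by
  have hloc : checkLoss τ =ᶠ[𝓝 u] fun v => v * score τ u :=
    (score_eventuallyEq_of_ne_zero hu).mono fun v hv => by
      change v * score τ v = v * score τ u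
      rw [hv]
  simpa using ((hasDerivAt_id u).mul_const (score τ u)).congr_of_eventuallyEq hloc

lemma integrable_apply_of_integrable_sqrt_sum_sq {Ω ι : Type*} [MeasurableSpace Ω] [Fintype ι]
    {μ : Measure Ω} {Z : Ω → ι → ℝ} (hZ : Measurable Z)
    (h : Integrable (fun ω => √(∑ i, Z ω i ^ 2)) μ) (j : ι) :
    Integrable (fun ω => Z ω j) μ := by
  refine h.mono ((measurable_pi_apply j).comp hZ).aestronglyMeasurable (ae_of_all _ fun ω => ?_)
  rw [Real.norm_eq_abs, Real.norm_of_nonneg (Real.sqrt_nonneg _)]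
  exact Real.abs_le_sqrt (Finset.single_le_sum (fun i _ => sq_nonneg (Z ω i)) (Finset.mem_univ j))

theorem hasDerivAt_integral_checkLoss_sub_mul {Ω : Type*} [MeasurableSpace Ω] {μ : Measure Ω}
    (τ : ℝ) {C A G : Ω → ℝ} (hC : AEMeasurable C μ) (hA : Integrable A μ)
    (hC0 : μ {ω | C ω = 0} = 0) (hint : Integrable (fun ω => checkLoss τ (C ω) - G ω) μ) :
    HasDerivAt (fun t => ∫ ω, (checkLoss τ (C ω - t * A ω) - G ω) ∂μ)
      (-∫ ω, A ω * score τ (C ω) ∂μ) 0 := by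
  have hρ := lipschitzWith_checkLoss τ
  have hρC := hρ.continuous.comp_aestronglyMeasurable hC.aestronglyMeasurable
  have hG : AEStronglyMeasurable G μ := by
    convert hρC.sub hint.aestronglyMeasurable using 1
    ext ω
    simp
  have hF_meas (t : ℝ) :
      AEStronglyMeasurable (fun ω => checkLoss τ (C ω - t * A ω) - G ω) μ :=
    (hρ.continuous.comp_aestronglyMeasurable
      (hC.aestronglyMeasurable.sub (hA.1.const_mul t))).sub hG
  have hF'_meas : AEStronglyMeasurable (fun ω => -(A ω * score τ (C ω))) μ :=
    (hA.1.mul ((measurable_score τ).comp_aemeasurable hC).aestronglyMeasurable).neg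
  have h_lipsch : ∀ᵐ ω ∂μ, LipschitzOnWith (Real.nnabs ((‖τ‖ + 1) * ‖A ω‖))
      (fun t => checkLoss τ (C ω - t * A ω) - G ω) Set.univ := by
    refine ae_of_all _ fun ω => LipschitzWith.lipschitzOnWith ?_
    have hlin : LipschitzWith ‖A ω‖₊ fun t => C ω - t * A ω :=
      LipschitzWith.of_dist_le_mul fun s t => by
        rw [Real.dist_eq, Real.dist_eq, coe_nnnorm, Real.norm_eq_abs, abs_sub_comm s t,
          ← abs_mul]
        exact le_of_eq (congrArg abs (by ring))
    have hnn : Real.nnabs ((‖τ‖ + 1) * ‖A ω‖) = (‖τ‖₊ + 1) * ‖A ω‖₊ := by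
      ext
      simp [add_nonneg]
    rw [hnn]
    simpa only [add_zero, Function.comp_def] using (hρ.comp hlin).sub (LipschitzWith.const (G ω))
  have h_diff : ∀ᵐ ω ∂μ,
      HasDerivAt (fun t => checkLoss τ (C ω - t * A ω) - G ω) (-(A ω * score τ (C ω))) 0 := by
    filter_upwards [measure_eq_zero_iff_ae_notMem.1 hC0] with ω hω
    have hlin : HasDerivAt (fun t => C ω - t * A ω) (-A ω) 0 := by
      simpa using ((hasDerivAt_id (0 : ℝ)).mul_const (A ω)).const_sub (C ω)
    have := ((hasDerivAt_checkLoss_of_ne_zero τ hω).comp_of_eq 0 hlin (by simp)).sub_const (G ω)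
    simpa [mul_comm] using this
  simpa [integral_neg] using (hasDerivAt_integral_of_dominated_loc_of_lip univ_mem
    (Eventually.of_forall hF_meas) (by simpa using hint) hF'_meas h_lipsch
    (hA.norm.const_mul _) h_diff).2

theorem population_first_order_condition_general {Ω : Type*} [MeasurableSpace Ω] {k : ℕ}
    (μ : Measure Ω)
    (Y : Ω → ℝ) (Z : Ω → Fin k → ℝ) (hY : Measurable Y) (hZ : Measurable Z)
    (τ : ℝ)
    (hZint : Integrable (fun ω => Real.sqrt (∑ j, (Z ω j)^2)) μ)
    (hρint : ∀ θ : Fin k → ℝ,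
      Integrable (fun ω => checkLoss τ (Y ω - Z ω ⬝ᵥ θ) - checkLoss τ (Y ω)) μ)
    (θs : Fin k → ℝ)
    (hmin : ∀ θ : Fin k → ℝ,
      (∫ ω, (checkLoss τ (Y ω - Z ω ⬝ᵥ θs) - checkLoss τ (Y ω)) ∂μ) ≤
        ∫ ω, (checkLoss τ (Y ω - Z ω ⬝ᵥ θ) - checkLoss τ (Y ω)) ∂μ)
    (hatom : μ {ω | Y ω = Z ω ⬝ᵥ θs} = 0) :
    ∀ j, (∫ ω, Z ω j * score τ (Y ω - Z ω ⬝ᵥ θs) ∂μ) = 0 := by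
  intro j
  have hresid : Measurable fun ω => Y ω - Z ω ⬝ᵥ θs :=
    hY.sub ((continuous_id.dotProduct continuous_const).measurable.comp hZ)
  have hderiv := hasDerivAt_integral_checkLoss_sub_mul τ hresid.aemeasurable
    (integrable_apply_of_integrable_sqrt_sum_sq hZ hZint j)
    (by simpa only [sub_eq_zero] using hatom) (hρint θs)
  have hlocal_min : IsLocalMin
      (fun t => ∫ ω, (checkLoss τ (Y ω - Z ω ⬝ᵥ θs - t * Z ω j) - checkLoss τ (Y ω)) ∂μ) 0 :=
    Eventually.of_forall fun t => by
      have hdot (ω : Ω) : Z ω ⬝ᵥ (θs + t • Pi.single j 1) = Z ω ⬝ᵥ θs + t * Z ω j := by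
        simp [dotProduct_add, dotProduct_smul, dotProduct_single]
      have h := hmin (θs + t • Pi.single j 1)
      simp only [hdot] at h
      simpa [sub_sub] using h
  simpa using hlocal_min.hasDerivAt_eq_zero hderiv

/-- First-order condition for the population quantile regression coefficient: if `θ*`
minimizes `θ ↦ E[ρ_τ(Y − ⟨Z,θ⟩) − ρ_τ(Y)]`, `E‖Z‖₂ < ∞`, and `P(Y = ⟨Z,θ*⟩) = 0`,
then `E[Z φ_τ(Y − ⟨Z,θ*⟩)] = 0`. -/
theorem population_first_order_condition {Ω : Type*} [MeasurableSpace Ω] {k : ℕ}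
    (μ : Measure Ω) [IsProbabilityMeasure μ]
    (Y : Ω → ℝ) (Z : Ω → Fin k → ℝ) (hY : Measurable Y) (hZ : Measurable Z)
    (τ : ℝ) (hτ0 : 0 < τ) (hτ1 : τ < 1)
    (hZint : Integrable (fun ω => Real.sqrt (∑ j, (Z ω j)^2)) μ)
    (hρint : ∀ θ : Fin k → ℝ,
      Integrable (fun ω => checkLoss τ (Y ω - Z ω ⬝ᵥ θ) - checkLoss τ (Y ω)) μ)
    (θs : Fin k → ℝ)
    (hmin : ∀ θ : Fin k → ℝ,
      (∫ ω, (checkLoss τ (Y ω - Z ω ⬝ᵥ θs) - checkLoss τ (Y ω)) ∂μ) ≤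
        ∫ ω, (checkLoss τ (Y ω - Z ω ⬝ᵥ θ) - checkLoss τ (Y ω)) ∂μ)
    (hatom : μ {ω | Y ω = Z ω ⬝ᵥ θs} = 0) :
    ∀ j, (∫ ω, Z ω j * score τ (Y ω - Z ω ⬝ᵥ θs) ∂μ) = 0 :=
  population_first_order_condition_general μ Y Z hY hZ τ hZint hρint θs hmin hatom
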